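/- The difference in final CGR points caused by the first character persists: for sequences s·w and t·w with s ≠ t sharing the same suffix w of length n, the final points differ by (C(s) − C(t))/2^{n+1}; in particular, if C is injective, the final points are distinct. -/
import Mathlib

/-- One CGR step: midpoint of the current point and the corner point. -/
def cgrStep (p c : ℚ × ℚ) : ℚ × ℚ := ((p.1 + c.1) / 2, (p.2 + c.2) / 2)

/-- The final CGR point after processing a sequence from start point `p`. -/
def cgrRun {σ : Type*} (C : σ → ℚ × ℚ) : ℚ × ℚ → List σ → ℚ × ℚ
  | p, [] => p
  | p, s :: t => cgrRun C (cgrStep p (C s)) t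

lemma cgrRun_diff {σ : Type*} (C : σ → ℚ × ℚ) (w : List σ) :
    ∀ p q : ℚ × ℚ,
      (cgrRun C p w).1 - (cgrRun C q w).1 = (p.1 - q.1) / 2 ^ w.length ∧
      (cgrRun C p w).2 - (cgrRun C q w).2 = (p.2 - q.2) / 2 ^ w.length := by
  induction w with
  | nil => intro p q; simp [cgrRun]
  | cons a w ih =>
    intro p q
    obtain ⟨h1, h2⟩ := ih (cgrStep p (C a)) (cgrStep q (C a))
    simp only [cgrRun, List.length_cons]
    constructor
    · rw [h1]; simp [cgrStep]; ring
    · rw [h2]; simp [cgrStep]; ring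

/-- for sequences `s·w` and `t·w` with the same suffix `w` of length `n`,
the final CGR points differ by `(C(s) − C(t))/2^(n+1)`; in particular if `C` is injective
and `s ≠ t`, the final points are distinct. -/
theorem cgr_first_char_difference_persists {σ : Type*} [Fintype σ] (C : σ → ℚ × ℚ)
    (s t : σ) (hst : s ≠ t) (w : List σ) :
    ((cgrRun C (0, 0) (s :: w)).1 - (cgrRun C (0, 0) (t :: w)).1
        = ((C s).1 - (C t).1) / 2 ^ (w.length + 1)) ∧
    ((cgrRun C (0, 0) (s :: w)).2 - (cgrRun C (0, 0) (t :: w)).2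
        = ((C s).2 - (C t).2) / 2 ^ (w.length + 1)) ∧
    (Function.Injective C → cgrRun C (0, 0) (s :: w) ≠ cgrRun C (0, 0) (t :: w)) := by
  obtain ⟨h1, h2⟩ := cgrRun_diff C w (cgrStep (0,0) (C s)) (cgrStep (0,0) (C t))
  simp only [cgrStep] at h1 h2
  have e1 : (cgrRun C (0, 0) (s :: w)).1 - (cgrRun C (0, 0) (t :: w)).1
      = ((C s).1 - (C t).1) / 2 ^ (w.length + 1) := by
    simp only [cgrRun, cgrStep]
    rw [h1]; ring
  have e2 : (cgrRun C (0, 0) (s :: w)).2 - (cgrRun C (0, 0) (t :: w)).2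
      = ((C s).2 - (C t).2) / 2 ^ (w.length + 1) := by
    simp only [cgrRun, cgrStep]
    rw [h2]; ring
  refine ⟨e1, e2, fun hinj heq => ?_⟩
  have hC : C s ≠ C t := fun h => hst (hinj h)
  have : (C s).1 = (C t).1 ∧ (C s).2 = (C t).2 := by
    constructor
    · have := e1; rw [heq, sub_self] at this
      have h2 : ((2:ℚ) ^ (w.length + 1)) ≠ 0 := by positivity
      field_simp at this; linarith
    · have := e2; rw [heq, sub_self] at this
      have h2 : ((2:ℚ) ^ (w.length + 1)) ≠ 0 := by positivity
      field_simp at this; linarith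
  exact hC (Prod.ext this.1 this.2)
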